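/- Let G be a group with a proper left-invariant pseudo-metric d_G, and let H, K ≤ G be subgroups such that gr_{H,K}(r) ≥ δ · gr_G(r) for all r ≥ 1 and some δ > 0. If A ⊆ G is exponentially generic in G, then its image Π(A) under the map Π(g) = HgK is exponentially generic in the set of double cosets 𝔻(H,K) = {HgK : g ∈ G}, where genericity in 𝔻(H,K) is measured using the balls B_{H,K}(r). -/

import Mathlib

/-- The open ball of radius `r` about the identity. -/
def ballG {G : Type*} [Group G] (d : G → G → ℝ) (r : ℝ) : Set G := {g | d 1 g < r}

/-- The double coset `HgK` as a subset of `G`. -/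
def dcoset {G : Type*} [Group G] (H K : Subgroup G) (g : G) : Set G :=
  {x | ∃ h ∈ H, ∃ k ∈ K, x = h * g * k}

/-- The set of double cosets meeting the open ball of radius `r`. -/
def ballHK {G : Type*} [Group G] (d : G → G → ℝ) (H K : Subgroup G) (r : ℝ) :
    Set (Set G) :=
  {s | (∃ g : G, s = dcoset H K g) ∧ ∃ x ∈ s, d 1 x < r}

/-!
Every double coset in `B_{H,K}(r)` is `HxK` for some `x ∈ B_G(r)`, and if it misses `Π(A)`
then `x ∉ A`. Hence `#(B_{H,K}(r) \ Π(A)) ≤ #(B_G(r) \ A) ≤ c εʳ gr_G(r) ≤ (c/δ) εʳ gr_{H,K}(r)`.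
Once `c εʳ < 1`, genericity of `A` forces `B_G(r)` to be finite and nonempty (`ncard` of an
infinite set is `0`, and `x / 0 = 0`); the remaining radii are absorbed into the constant.
-/

open Set

section Density

variable {α β : Type*}

lemma abs_ncard_inter_div_ncard_sub_one_le_one (B S : Set α) :
    |((B ∩ S).ncard : ℝ) / S.ncard - 1| ≤ 1 := by
  have hle : ((B ∩ S).ncard : ℝ) / S.ncard ≤ 1 := by
    rcases S.finite_or_infinite with hS | hS
    · exact div_le_one_of_le₀ (by exact_mod_cast ncard_le_ncard inter_subset_right hS)
        (Nat.cast_nonneg _)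
    · simp [hS.ncard]
  rw [abs_le]
  constructor <;> linarith [show (0 : ℝ) ≤ ((B ∩ S).ncard : ℝ) / S.ncard by positivity]

lemma abs_ncard_inter_div_ncard_sub_one {B S : Set α} (hS : 0 < S.ncard) :
    |((B ∩ S).ncard : ℝ) / S.ncard - 1| = (S \ B).ncard / S.ncard := by
  have hsplit : ((S ∩ B).ncard : ℝ) + (S \ B).ncard = S.ncard := by
    exact_mod_cast ncard_inter_add_ncard_sdiff_eq_ncard S B (finite_of_ncard_pos hS)
  have hS' : (S.ncard : ℝ) ≠ 0 := by positivity
  rw [inter_comm, ← abs_neg]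
  convert abs_of_nonneg (by positivity : (0 : ℝ) ≤ (S \ B).ncard / S.ncard) using 2
  field_simp
  linarith

lemma ncard_pos_of_abs_ncard_inter_div_ncard_sub_one_lt_one {A T : Set α}
    (h : |((A ∩ T).ncard : ℝ) / T.ncard - 1| < 1) : 0 < T.ncard := by
  by_contra hT
  simp_all

lemma abs_ncard_image_inter_div_ncard_sub_one_le {f : α → β} {A T : Set α} {S : Set β} {δ η : ℝ}
    (hδ : 0 < δ) (hη : η < 1) (hA : |((A ∩ T).ncard : ℝ) / T.ncard - 1| ≤ η)
    (hSA : S \ f '' A ⊆ f '' (T \ A)) (hgrowth : δ * T.ncard ≤ S.ncard) :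
    |(((f '' A) ∩ S).ncard : ℝ) / S.ncard - 1| ≤ η / δ := by
  have hT : 0 < T.ncard := ncard_pos_of_abs_ncard_inter_div_ncard_sub_one_lt_one (hA.trans_lt hη)
  have hT' : (0 : ℝ) < T.ncard := by exact_mod_cast hT
  have hS : (0 : ℝ) < S.ncard := (mul_pos hδ hT').trans_le hgrowth
  have hTfin : T.Finite := finite_of_ncard_pos hT
  have hmiss : ((S \ f '' A).ncard : ℝ) ≤ (T \ A).ncard := by
    exact_mod_cast (ncard_le_ncard hSA (hTfin.sdiff.image f)).trans
      (ncard_image_le hTfin.sdiff)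
  rw [abs_ncard_inter_div_ncard_sub_one (by exact_mod_cast hS)]
  rw [abs_ncard_inter_div_ncard_sub_one hT, div_le_iff₀ hT'] at hA
  rw [div_le_iff₀ hS, div_mul_eq_mul_div, le_div_iff₀ hδ]
  nlinarith

end Density

section DoubleCosets

variable {G : Type*} [Group G]

lemma dcoset_eq_of_mem (H K : Subgroup G) {g x : G} (hx : x ∈ dcoset H K g) :
    dcoset H K x = dcoset H K g := by
  obtain ⟨h, hh, k, hk, rfl⟩ := hx
  ext y
  constructor
  · rintro ⟨h', hh', k', hk', rfl⟩
    exact ⟨h' * h, H.mul_mem hh' hh, k * k', K.mul_mem hk hk', by group⟩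
  · rintro ⟨h', hh', k', hk', rfl⟩
    exact ⟨h' * h⁻¹, H.mul_mem hh' (H.inv_mem hh), k⁻¹ * k', K.mul_mem (K.inv_mem hk) hk',
      by group⟩

lemma ballHK_diff_image_subset (d : G → G → ℝ) (H K : Subgroup G) (A : Set G) (r : ℝ) :
    ballHK d H K r \ dcoset H K '' A ⊆ dcoset H K '' (ballG d r \ A) := by
  rintro s ⟨⟨⟨g, rfl⟩, x, hx, hxr⟩, hsA⟩
  refine ⟨x, ⟨hxr, fun hxA => hsA ⟨x, hxA, dcoset_eq_of_mem H K hx⟩⟩,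
    dcoset_eq_of_mem H K hx⟩

end DoubleCosets

theorem stmt5_general {G : Type*} [Group G] (d : G → G → ℝ)
    (H K : Subgroup G) (δ : ℝ) (hδ : 0 < δ)
    (hgrowth : ∀ r : ℝ, 1 ≤ r →
      δ * ((ballG d r).ncard : ℝ) ≤ ((ballHK d H K r).ncard : ℝ))
    (A : Set G)
    (hA : ∃ c > (0 : ℝ), ∃ ε ∈ Set.Ioo (0 : ℝ) 1, ∀ r : ℝ, 0 < r →
      |(((A ∩ ballG d r).ncard : ℝ) / ((ballG d r).ncard : ℝ)) - 1| ≤ c * ε ^ r) :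
    ∃ c > (0 : ℝ), ∃ ε ∈ Set.Ioo (0 : ℝ) 1, ∀ r : ℝ, 0 < r →
      |((((dcoset H K '' A) ∩ ballHK d H K r).ncard : ℝ) /
          ((ballHK d H K r).ncard : ℝ)) - 1| ≤ c * ε ^ r := by
  obtain ⟨c, hc, ε, ⟨hε0, hε1⟩, hAr⟩ := hA
  set C := max (c / δ) (max c ε⁻¹)
  refine ⟨C, lt_max_of_lt_left (by positivity), ε, ⟨hε0, hε1⟩, fun r hr => ?_⟩
  have hεr : 0 < ε ^ r := Real.rpow_pos_of_pos hε0 r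
  rcases le_or_gt 1 (C * ε ^ r) with hlarge | hsmall
  · exact (abs_ncard_inter_div_ncard_sub_one_le_one _ _).trans hlarge
  have hcε : c * ε ^ r < 1 :=
    (mul_le_mul_of_nonneg_right ((le_max_left _ _).trans (le_max_right _ _)) hεr.le).trans_lt
      hsmall
  have hr1 : 1 ≤ r := by
    have : ε⁻¹ * ε ^ r < 1 :=
      (mul_le_mul_of_nonneg_right ((le_max_right _ _).trans (le_max_right _ _)) hεr.le).trans_lt
        hsmall
    rw [inv_mul_lt_iff₀ hε0, mul_one] at this
    exact ((Real.rpow_lt_rpow_left_iff_of_base_lt_one hε0 hε1).mp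
      (by rwa [Real.rpow_one])).le
  calc _ ≤ c * ε ^ r / δ :=
        abs_ncard_image_inter_div_ncard_sub_one_le hδ hcε (hAr r hr)
          (ballHK_diff_image_subset d H K A r) (hgrowth r hr1)
    _ ≤ C * ε ^ r := by
        rw [mul_div_right_comm]
        exact mul_le_mul_of_nonneg_right (le_max_left _ _) hεr.le

/-- If `gr_{H,K}(r) ≥ δ·gr_G(r)` for all `r ≥ 1` and some `δ > 0`, then the image
under `Π : g ↦ HgK` of an exponentially generic subset of `G` is exponentially
generic in the set of double cosets `𝔻(H,K)`. -/
theorem stmt5 {G : Type*} [Group G] (d : G → G → ℝ)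
    (hrefl : ∀ g : G, d g g = 0)
    (hsymm : ∀ g₁ g₂ : G, d g₁ g₂ = d g₂ g₁)
    (htri : ∀ g₁ g₂ g₃ : G, d g₁ g₃ ≤ d g₁ g₂ + d g₂ g₃)
    (hinv : ∀ h g₁ g₂ : G, d (h * g₁) (h * g₂) = d g₁ g₂)
    (hproper : ∀ r : ℝ, (ballG d r).Finite)
    (H K : Subgroup G) (δ : ℝ) (hδ : 0 < δ)
    (hgrowth : ∀ r : ℝ, 1 ≤ r →
      δ * ((ballG d r).ncard : ℝ) ≤ ((ballHK d H K r).ncard : ℝ))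
    (A : Set G)
    (hA : ∃ c > (0 : ℝ), ∃ ε ∈ Set.Ioo (0 : ℝ) 1, ∀ r : ℝ, 0 < r →
      |(((A ∩ ballG d r).ncard : ℝ) / ((ballG d r).ncard : ℝ)) - 1| ≤ c * ε ^ r) :
    ∃ c > (0 : ℝ), ∃ ε ∈ Set.Ioo (0 : ℝ) 1, ∀ r : ℝ, 0 < r →
      |((((dcoset H K '' A) ∩ ballHK d H K r).ncard : ℝ) /
          ((ballHK d H K r).ncard : ℝ)) - 1| ≤ c * ε ^ r :=
  stmt5_general d H K δ hδ hgrowth A hA
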